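/- arXiv:2002.11660 — 3 statements merged into one kernel-verified Lean document; each statement's English description precedes it below -/
import Mathlib

section
/- In a house market with strict preferences, suppose there is an enumeration a_1, a_2, ..., a_n of the agents such that for every k, the resource π_{a_k} is agent a_k's most preferred resource among all resources not assigned to a_1, ..., a_{k-1}. Then the allocation π is Pareto-optimal. -/
/-- A house market with `n` agents and `n` resources, both indexed by `Fin n`.
An allocation is a bijection from agents to resources, modeled as a permutation
of `Fin n`.  `pref i r r'` means agent `i` strictly prefers resource `r` to `r'`.
An allocation `π` is Pareto-optimal if no allocation `π'` gives every agent a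
resource that is the same or strictly better, and some agent a strictly better one. -/
def ParetoOptimal {n : ℕ} (pref : Fin n → Fin n → Fin n → Prop)
    (π : Equiv.Perm (Fin n)) : Prop :=
  ¬ ∃ π' : Equiv.Perm (Fin n),
      (∀ i, π' i = π i ∨ pref i (π' i) (π i)) ∧ ∃ j, pref j (π' j) (π j)

/-- Suppose there is an enumeration `e 0, e 1, …, e (n-1)` of the agents such
that for every `k`, the resource `π (e k)` is agent `e k`'s most preferred
resource among all resources not assigned to the agents `e l` with `l < k`.
Then `π` is Pareto-optimal. -/
theorem serial_dictatorship_pareto_optimal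
    {n : ℕ} (pref : Fin n → Fin n → Fin n → Prop)
    (hlin : ∀ i, IsStrictTotalOrder (Fin n) (pref i))
    (π : Equiv.Perm (Fin n)) (e : Equiv.Perm (Fin n))
    (hserial : ∀ k : Fin n, ∀ r : Fin n,
      (∀ l : Fin n, l < k → π (e l) ≠ r) → r ≠ π (e k) → pref (e k) (π (e k)) r) :
    ParetoOptimal pref π := by
  rintro ⟨π', himp, j, hj⟩
  have hne : ∃ k : Fin n, π' (e k) ≠ π (e k) := by
    refine ⟨e.symm j, ?_⟩
    simp only [Equiv.apply_symm_apply]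
    intro h
    exact (hlin j).irrefl (π j) (h ▸ hj)
  obtain ⟨k, hk, hmin⟩ := Finset.exists_min_image
    (Finset.univ.filter fun k => π' (e k) ≠ π (e k)) id
    ⟨hne.choose, by simpa using hne.choose_spec⟩
  simp only [Finset.mem_filter, Finset.mem_univ, true_and] at hk hmin
  -- for l < k, π' (e l) = π (e l)
  have heq : ∀ l : Fin n, l < k → π' (e l) = π (e l) := by
    intro l hl
    by_contra h
    exact absurd (hmin l h) (not_le.mpr hl)
  have h1 : ∀ l : Fin n, l < k → π (e l) ≠ π' (e k) := by
    intro l hl h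
    have : π' (e l) = π' (e k) := (heq l hl).trans h
    have : l = k := e.injective (π'.injective this)
    exact absurd hl (this ▸ lt_irrefl k)
  have h2 := hserial k (π' (e k)) h1 hk
  rcases himp (e k) with h | h
  · exact hk h
  · exact (hlin (e k)).irrefl _ ((hlin (e k)).trans _ _ _ h h2)
end

section
/- In a house market with strict preferences, an allocation π is not Pareto-optimal if and only if there exists a permutation σ of the agents, different from the identity, such that every agent i with σ(i) ≠ i strictly prefers π_{σ(i)} to π_i (an improving trading cycle). -/
/-- An allocation `π` is not Pareto-optimal if and only if there exists a
permutation `σ` of the agents, different from the identity, such that every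
agent `i` with `σ i ≠ i` strictly prefers `π (σ i)` to `π i`
(an improving trading cycle). -/
theorem not_pareto_optimal_iff_improving_trading_cycle
    {n : ℕ} (pref : Fin n → Fin n → Fin n → Prop)
    (hlin : ∀ i, IsStrictTotalOrder (Fin n) (pref i))
    (π : Equiv.Perm (Fin n)) :
    ¬ ParetoOptimal pref π ↔
      ∃ σ : Equiv.Perm (Fin n), σ ≠ 1 ∧
        ∀ i : Fin n, σ i ≠ i → pref i (π (σ i)) (π i) := by
  constructor
  · intro h
    rw [ParetoOptimal, not_not] at h
    obtain ⟨π', h1, j, hj⟩ := h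
    have hne : π' j ≠ π j := fun he => (hlin j).irrefl (π j) (he ▸ hj)
    refine ⟨π'.trans π.symm, ?_, ?_⟩
    · intro he
      apply hne
      have := congrArg (fun f : Equiv.Perm (Fin n) => π (f j)) he
      simpa using this
    · intro i hi
      have hne' : π' i ≠ π i := fun he => hi (by simp [Equiv.trans_apply, he])
      have := (h1 i).resolve_left hne'
      simpa [Equiv.trans_apply] using this
  · rintro ⟨σ, hσ, hpref⟩
    rw [ParetoOptimal, not_not]
    refine ⟨σ.trans π, ?_, ?_⟩
    · intro i
      by_cases h : σ i = i
      · left; simp [Equiv.trans_apply, h]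
      · right; exact hpref i h
    · obtain ⟨j, hj⟩ : ∃ j, σ j ≠ j := by
        by_contra hc
        push_neg at hc
        exact hσ (Equiv.ext fun x => hc x)
      exact ⟨j, hpref j hj⟩
end

section
/- Let ≻ and ≻' be two distinct linear orders on a set of n resources, and let π⁰ be the allocation assigning resource r_i to agent a_i for each i. Then there exists an agent p such that, in the profile where agent p has preference ≻' and every other agent has preference ≻, the allocation π⁰ is not Pareto-optimal. -/
/-!
Two distinct strict total orders must disagree on some pair: there are `a ≠ b` with `a ≻ b`
but `b ≻' a`. Give agent `a` the order `≻'` and everyone else `≻`; then agents `a` and `b`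
each prefer the other's resource, and swapping them is a Pareto improvement over `π⁰`.
-/

theorem exists_rel_and_flip_of_ne {α : Type*} {r s : α → α → Prop}
    [IsStrictTotalOrder α r] [IsStrictTotalOrder α s] (hne : r ≠ s) :
    ∃ a b, r a b ∧ s b a := by
  by_contra! h
  have incl : ∀ {r s : α → α → Prop} [IsStrictTotalOrder α r] [IsStrictTotalOrder α s],
      (∀ a b, r a b → ¬ s b a) → ∀ a b, r a b → s a b := by
    intro r s _ _ h a b hab
    rcases trichotomous_of s a b with hs | rfl | hs
    · exact hs
    · exact absurd hab (irrefl a)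
    · exact absurd hs (h a b hab)
  exact hne <| funext₂ fun a b =>
    propext ⟨incl h a b, incl (fun b a hs hr => h a b hr hs) a b⟩

theorem not_paretoOptimal_refl_of_prefer_swap {n : ℕ} {pref : Fin n → Fin n → Fin n → Prop}
    {a b : Fin n} (hab : a ≠ b) (ha : pref a b a) (hb : pref b a b) :
    ¬ ParetoOptimal pref (Equiv.refl (Fin n)) := by
  refine not_not_intro ⟨Equiv.swap a b, fun i => ?_, a, by simpa using ha⟩
  rcases eq_or_ne i a with rfl | hia
  · exact .inr (by simpa using ha)
  rcases eq_or_ne i b with rfl | hib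
  · exact .inr (by simpa using hb)
  · exact .inl (Equiv.swap_apply_of_ne_of_ne hia hib)

/-- Let `succ` and `succ'` be two distinct strict linear orders on the `n`
resources, and let `π⁰` be the allocation assigning resource `i` to agent `i`.
Then there is an agent `p` such that, in the profile where agent `p` has
preference `succ'` and every other agent has preference `succ`, the allocation
`π⁰` is not Pareto-optimal. -/
theorem fooling_mixed_profile_not_pareto_optimal
    {n : ℕ} (succ succ' : Fin n → Fin n → Prop)
    (hsucc : IsStrictTotalOrder (Fin n) succ)
    (hsucc' : IsStrictTotalOrder (Fin n) succ')
    (hne : succ ≠ succ') :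
    ∃ p : Fin n,
      ¬ ParetoOptimal (fun i => if i = p then succ' else succ)
        (Equiv.refl (Fin n)) := by
  obtain ⟨a, b, hab, hba'⟩ := exists_rel_and_flip_of_ne hne
  have hne_ab : a ≠ b := ne_of_irrefl hab
  refine ⟨a, not_paretoOptimal_refl_of_prefer_swap hne_ab ?_ ?_⟩
  · simpa using hba'
  · simpa [hne_ab.symm] using hab
end
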